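/- Let K be an algebraically closed field of characteristic 2 and let a, b ∈ K with a ≠ 0. Then the parametrization (t^4 + t^6 + a·t^7 + b·t^{11}, t^5) is A-equivalent to (t^4 + t^6 + a·t^7, t^5). -/

import Mathlib

open PowerSeries

variable {K : Type*} [Field K]

/-- The coefficient of `x^i y^j` in a formal power series in two variables. -/
noncomputable def mvCoeff (f : MvPowerSeries (Fin 2) K) (p : ℕ × ℕ) : K :=
  MvPowerSeries.coeff (R := K) (Finsupp.single (0 : Fin 2) p.1 + Finsupp.single (1 : Fin 2) p.2) f

/-- Substitution of a pair of power series (of positive order) into a formal power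
series in two variables; this realizes the algebra homomorphism
`ψ : K[[x,y]] → K[[t]]`, `x ↦ x(t)`, `y ↦ y(t)` associated to a parametrization. -/
noncomputable def substPair (x y : PowerSeries K) (f : MvPowerSeries (Fin 2) K) :
    PowerSeries K :=
  PowerSeries.mk fun n => ∑ p ∈ Finset.range (n + 1) ×ˢ Finset.range (n + 1),
    mvCoeff f p * PowerSeries.coeff (R := K) n (x ^ p.1 * y ^ p.2)

/-- Two parametrizations `(x(t), y(t))` and `(x̄(t), ȳ(t))` are `𝒜`-equivalent if the
associated homomorphisms `ψ, φ : K[[x,y]] → K[[t]]` satisfy `φ = r ∘ ψ ∘ l` for some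
`K`-algebra automorphism `l` of `K[[x,y]]` and some `K`-algebra automorphism `r` of
`K[[t]]`. -/
def AEquiv (ψ φ : PowerSeries K × PowerSeries K) : Prop :=
  ∃ (l : MvPowerSeries (Fin 2) K ≃ₐ[K] MvPowerSeries (Fin 2) K)
    (r : PowerSeries K ≃ₐ[K] PowerSeries K),
    ∀ f : MvPowerSeries (Fin 2) K,
      substPair φ.1 φ.2 f = r (substPair ψ.1 ψ.2 (l f))

/-- The image `K[[x(t),y(t)]] ⊆ K[[t]]` of a parametrization, as a `K`-submodule. -/
noncomputable def imageSubmodule (x y : PowerSeries K) : Submodule K (PowerSeries K) :=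
  Submodule.span K (Set.range (substPair x y))

/-- A parametrization is primitive if `δ = dim_K K[[t]]/K[[x(t),y(t)]]` is finite. -/
def IsPrimitive (x y : PowerSeries K) : Prop :=
  Module.Finite K (PowerSeries K ⧸ imageSubmodule x y)

/-- The delta invariant `δ(ψ) = dim_K K[[t]]/K[[x(t),y(t)]]`. -/
noncomputable def deltaInv (x y : PowerSeries K) : ℕ :=
  Module.finrank K (PowerSeries K ⧸ imageSubmodule x y)

/-- The semigroup of values `Γ(ψ) = { ord_t h : h ∈ K[[x(t),y(t)]], h ≠ 0 }`. -/
noncomputable def valueSemigroup (x y : PowerSeries K) : Set ℕ :=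
  {n : ℕ | ∃ f : MvPowerSeries (Fin 2) K,
    substPair x y f ≠ 0 ∧ (substPair x y f).order = (n : ℕ∞)}

/-!
In characteristic `2` put `c = b / a` and reparametrize by `t ↦ t + c t⁵ + c t⁷`. Modulo `t¹²`
this turns `x = t⁴ + t⁶ + a t⁷ + b t¹¹` into `x̄ = t⁴ + t⁶ + a t⁷` (the terms `a c t¹¹` and
`b t¹¹` cancel) and `y = t⁵` into `t⁵ + c t⁹ + c t¹¹ ≡ t⁵ + c x̄ t⁵`. Every series of order
`≥ 12`, the conductor of the semigroup `⟨4, 5⟩`, is a series of order `≥ 2` in the new `x` and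
`y`, so the remaining errors are absorbed by the coordinate change `X ↦ X + E₁`,
`Y ↦ Y + c X Y + E₂`.

Substitutions `Xᵢ ↦ Xᵢ + hᵢ` with `hᵢ ∈ 𝔪²` (both of `K[[x, y]]` and of `K[[t]]`) are
automorphisms: they move every series only in strictly higher order, so they are inverted by a
Neumann series.
-/

namespace MvPowerSeries

variable {σ R : Type*} [CommRing R]

lemma le_order_sum {ι : Type*} (s : Finset ι) (f : ι → MvPowerSeries σ R) {n : ℕ∞}
    (h : ∀ i ∈ s, n ≤ (f i).order) : n ≤ (∑ i ∈ s, f i).order :=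
  Finset.sum_induction f (fun g => n ≤ g.order)
    (fun _ _ hf hg => (le_min hf hg).trans min_order_le_add) (by simp) h

lemma order_le_of_add_one_le_order_sub {f g : MvPowerSeries σ R}
    (h : f.order + 1 ≤ (g - f).order) : f.order ≤ g.order :=
  calc f.order = min f.order (g - f).order := (min_eq_left (le_self_add.trans h)).symm
    _ ≤ (f + (g - f)).order := min_order_le_add
    _ = g.order := by rw [add_sub_cancel]

lemma constantCoeff_eq_zero_of_two_le_order {f : MvPowerSeries σ R} (hf : 2 ≤ f.order) :
    f.constantCoeff = 0 :=
  one_le_order_iff_constCoeff_eq_zero.1 (le_trans (by norm_num) hf)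

lemma two_le_order_C_mul_X_mul_X (c : R) (i j : σ) :
    2 ≤ (C c * (X i * X j) : MvPowerSeries σ R).order :=
  calc (2 : ℕ∞) = 0 + (1 + 1) := by norm_num
    _ ≤ (C c).order + ((X i).order + (X j).order) := by
      gcongr
      · exact zero_le
      all_goals exact one_le_order_iff_constCoeff_eq_zero.2 (constantCoeff_X _)
    _ ≤ _ := (add_le_add le_rfl le_order_mul).trans le_order_mul

lemma succ_le_order_pow_sub_pow {a b : MvPowerSeries σ R} (ha : a.constantCoeff = 0)
    (hb : b.constantCoeff = 0) (hab : 2 ≤ (a - b).order) (n : ℕ) :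
    ((n + 1 : ℕ) : ℕ∞) ≤ (a ^ n - b ^ n).order := by
  rcases n with _ | k
  · simp
  rw [← geom_sum₂_mul]
  refine le_trans ?_ le_order_mul
  have hsum :
      (k : ℕ∞) ≤ (∑ i ∈ Finset.range (k + 1), a ^ i * b ^ (k + 1 - 1 - i)).order := by
    refine le_order_sum _ _ fun i hi => ?_
    have hi : i ≤ k := Nat.lt_succ_iff.1 (Finset.mem_range.1 hi)
    calc (k : ℕ∞) = i + (k + 1 - 1 - i : ℕ) := by norm_cast; omega
      _ ≤ _ := (add_le_add (le_order_pow_of_constantCoeff_eq_zero i ha)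
          (le_order_pow_of_constantCoeff_eq_zero _ hb)).trans le_order_mul
  calc ((k + 1 + 1 : ℕ) : ℕ∞) = k + 2 := by push_cast; ring
    _ ≤ _ := add_le_add hsum hab

lemma succ_le_order_prod_pow_sub_prod_pow {ι : Type*} (s : Finset ι)
    {a b : ι → MvPowerSeries σ R} (ha : ∀ i, (a i).constantCoeff = 0)
    (hb : ∀ i, (b i).constantCoeff = 0) (hab : ∀ i, 2 ≤ (a i - b i).order) (n : ι → ℕ) :
    ((∑ i ∈ s, n i + 1 : ℕ) : ℕ∞) ≤
      (∏ i ∈ s, a i ^ n i - ∏ i ∈ s, b i ^ n i).order := by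
  classical
  induction s using Finset.induction with
  | empty => simp
  | insert j s hj ih =>
    rw [Finset.prod_insert hj, Finset.prod_insert hj, Finset.sum_insert hj,
      show a j ^ n j * ∏ i ∈ s, a i ^ n i - b j ^ n j * ∏ i ∈ s, b i ^ n i
        = a j ^ n j * (∏ i ∈ s, a i ^ n i - ∏ i ∈ s, b i ^ n i)
          + (a j ^ n j - b j ^ n j) * ∏ i ∈ s, b i ^ n i by ring]
    refine le_trans (le_min ?_ ?_) min_order_le_add
    · calc ((n j + ∑ i ∈ s, n i + 1 : ℕ) : ℕ∞)
            = n j + ((∑ i ∈ s, n i + 1 : ℕ) : ℕ∞) := by push_cast; ring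
        _ ≤ _ := (add_le_add (le_order_pow_of_constantCoeff_eq_zero _ (ha j)) ih).trans
          le_order_mul
    · have hprod : ((∑ i ∈ s, n i : ℕ) : ℕ∞) ≤ (∏ i ∈ s, b i ^ n i).order := by
        push_cast
        exact (Finset.sum_le_sum fun i _ =>
          le_order_pow_of_constantCoeff_eq_zero (n i) (hb i)).trans (le_order_prod _ s)
      calc ((n j + ∑ i ∈ s, n i + 1 : ℕ) : ℕ∞)
          = ((n j + 1 : ℕ) : ℕ∞) + ((∑ i ∈ s, n i : ℕ) : ℕ∞) := by push_cast; ring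
        _ ≤ _ := (add_le_add (succ_le_order_pow_sub_pow (ha j) (hb j) (hab j) _) hprod).trans
          le_order_mul

section OrderRaising

variable (T : MvPowerSeries σ R →+ MvPowerSeries σ R)
  (hT : ∀ f, f.order + 1 ≤ (T f - f).order)
include hT

lemma injective_of_add_one_le_order_sub : Function.Injective T := by
  refine (injective_iff_map_eq_zero T).2 fun f hf => order_eq_top_iff.1 ?_
  by_contra hne
  have := hT f
  rw [hf, zero_sub, order_neg, ENat.add_one_le_iff hne] at this
  exact this.false

lemma add_le_order_iterate_sub (g : MvPowerSeries σ R) (j : ℕ) :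
    g.order + j ≤ ((fun f => f - T f)^[j] g).order := by
  induction j with
  | zero => simp
  | succ j ih =>
    have := hT ((fun f => f - T f)^[j] g)
    rw [← order_neg (T _ - _), neg_sub] at this
    rw [Function.iterate_succ_apply', Nat.cast_succ, ← add_assoc]
    exact (add_le_add ih le_rfl).trans this

lemma surjective_of_add_one_le_order_sub : Function.Surjective T := by
  set D : MvPowerSeries σ R → MvPowerSeries σ R := fun f => f - T f
  have hTD (u : MvPowerSeries σ R) : T u = u - D u := by simp [D]
  have hD (g : MvPowerSeries σ R) (j : ℕ) (d : σ →₀ ℕ) (hd : d.degree < j) :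
      coeff d (D^[j] g) = 0 :=
    coeff_of_lt_order ((Nat.cast_lt.2 hd).trans_le (le_add_self.trans
      (add_le_order_iterate_sub T hT g j)))
  intro g
  -- the Neumann series `∑ j, D^[j] g`, which converges since `D` raises the order
  set S : MvPowerSeries σ R := fun e => coeff e (∑ j ∈ Finset.range (e.degree + 1), D^[j] g)
  refine ⟨S, ?_⟩
  ext e
  set P := ∑ j ∈ Finset.range (e.degree + 1), D^[j] g
  have hP : T P = g - D^[e.degree + 1] g := by
    rw [map_sum]
    simp only [hTD, ← Function.iterate_succ_apply' D, Finset.sum_range_sub',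
      Function.iterate_zero_apply]
  have hSP : ((e.degree + 1 : ℕ) : ℕ∞) ≤ (S - P).order := by
    refine le_order fun d hd => ?_
    rw [Nat.cast_lt] at hd
    change coeff d (∑ j ∈ Finset.range (d.degree + 1), D^[j] g)
      - coeff d (∑ j ∈ Finset.range (e.degree + 1), D^[j] g) = 0
    rw [← Finset.sum_range_add_sum_Ico _ (show d.degree + 1 ≤ e.degree + 1 by omega),
      map_add, sub_add_cancel_left, neg_eq_zero, map_sum]
    exact Finset.sum_eq_zero fun j hj => hD g j d (Finset.mem_Ico.1 hj).1
  have hTSP : coeff e (T (S - P)) = 0 :=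
    coeff_of_lt_order ((Nat.cast_lt.2 e.degree.lt_succ_self).trans_le
      (hSP.trans (order_le_of_add_one_le_order_sub (hT _))))
  calc coeff e (T S) = coeff e (T (S - P)) + coeff e (T P) := by
        rw [← map_add, ← map_add, sub_add_cancel]
    _ = coeff e g := by rw [hTSP, hP, map_sub, hD g _ e e.degree.lt_succ_self, zero_add, sub_zero]

theorem bijective_of_add_one_le_order_sub : Function.Bijective T :=
  ⟨injective_of_add_one_le_order_sub T hT, surjective_of_add_one_le_order_sub T hT⟩

end OrderRaising

variable [Finite σ] {h : σ → MvPowerSeries σ R}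

lemma hasSubst_X_add (hh : ∀ i, 2 ≤ (h i).order) : HasSubst (fun i => X i + h i) :=
  hasSubst_of_constantCoeff_zero fun i => by
    simp [constantCoeff_eq_zero_of_two_le_order (hh i)]

lemma add_one_le_order_subst_X_add_sub (hh : ∀ i, 2 ≤ (h i).order) (f : MvPowerSeries σ R) :
    f.order + 1 ≤ (subst (fun i => X i + h i) f - f).order := by
  refine le_order fun e he => ?_
  have hf : coeff e f = coeff e (subst X f) := by rw [subst_self]; rfl
  rw [map_sub, hf, coeff_subst (hasSubst_X_add hh), coeff_subst HasSubst.X,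
    ← finsum_sub_distrib (coeff_subst_finite (hasSubst_X_add hh) f e)
      (coeff_subst_finite HasSubst.X f e)]
  refine finsum_eq_zero_of_forall_eq_zero fun d => ?_
  rw [← smul_sub, ← map_sub, smul_eq_mul]
  by_cases hd : (d.degree : ℕ∞) < f.order
  · rw [coeff_of_lt_order hd, zero_mul]
  refine mul_eq_zero_of_right _ (coeff_of_lt_order ?_)
  have hprod := succ_le_order_prod_pow_sub_prod_pow d.support (a := fun i => X i + h i) (b := X)
    (fun i => by simp [constantCoeff_eq_zero_of_two_le_order (hh i)]) (fun i => by simp)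
    (fun i => by simpa using hh i) d
  calc (e.degree : ℕ∞) < f.order + 1 := he
    _ ≤ d.degree + 1 := add_le_add (not_lt.1 hd) le_rfl
    _ = ((∑ i ∈ d.support, d i + 1 : ℕ) : ℕ∞) := by
      rw [Finsupp.degree_apply]; push_cast; rfl
    _ ≤ _ := hprod

noncomputable def substAlgEquiv (h : σ → MvPowerSeries σ R) (hh : ∀ i, 2 ≤ (h i).order) :
    MvPowerSeries σ R ≃ₐ[R] MvPowerSeries σ R :=
  AlgEquiv.ofBijective (substAlgHom (hasSubst_X_add hh))
    (bijective_of_add_one_le_order_sub (substAlgHom (hasSubst_X_add hh)).toRingHom.toAddMonoidHom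
      fun f => by simpa using add_one_le_order_subst_X_add_sub hh f)

@[simp]
lemma coe_substAlgEquiv (h : σ → MvPowerSeries σ R) (hh : ∀ i, 2 ≤ (h i).order) :
    ⇑(substAlgEquiv h hh) = subst (fun i => X i + h i) := by
  ext1 f; simp [substAlgEquiv]

end MvPowerSeries

lemma Finsupp.prod_pow_fin_two {M : Type*} [CommMonoid M] (d : Fin 2 →₀ ℕ) (a b : M) :
    d.prod (fun i k => ![a, b] i ^ k) = a ^ d 0 * b ^ d 1 := by
  rw [Finsupp.prod_fintype _ _ (fun _ => pow_zero _), Fin.prod_univ_two]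
  rfl

namespace PowerSeries

variable {R : Type*} [CommRing R]

lemma le_order_of_X_pow_dvd {n : ℕ} {k : PowerSeries R} (hk : X ^ n ∣ k) :
    n ≤ MvPowerSeries.order k := by
  rw [← order_eq_order]
  exact nat_le_order k n fun i hi => X_pow_dvd_iff.1 hk i hi

lemma X_pow_dvd_of_X_pow_succ_dvd_sub {k : ℕ} {x : PowerSeries R}
    (hx : X ^ (k + 1) ∣ x - X ^ k) : X ^ k ∣ x := by
  simpa using dvd_add ((pow_dvd_pow X k.le_succ).trans hx) (dvd_refl (X ^ k))

lemma X_pow_dvd_sub_trans {m n : ℕ} {f g h : PowerSeries R} (hmn : m ≤ n)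
    (hfg : X ^ n ∣ f - g) (hgh : X ^ m ∣ g - h) : X ^ m ∣ f - h := by
  simpa using dvd_add ((pow_dvd_pow X hmn).trans hfg) hgh

lemma X_pow_dvd_sub_iff {n : ℕ} {f g : PowerSeries R} :
    X ^ n ∣ f - g ↔ Ideal.Quotient.mk (Ideal.span {X ^ n}) f = Ideal.Quotient.mk _ g := by
  rw [Ideal.Quotient.eq, Ideal.mem_span_singleton]

lemma coeff_pow_mul_pow_eq_zero {x y : PowerSeries R} {p q n : ℕ} (hx : X ^ p ∣ x)
    (hy : X ^ q ∣ y) {i j : ℕ} (hn : n < p * i + q * j) : coeff n (x ^ i * y ^ j) = 0 := by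
  have : X ^ (p * i + q * j) ∣ x ^ i * y ^ j := by
    rw [pow_add, pow_mul, pow_mul]
    exact mul_dvd_mul (pow_dvd_pow_of_dvd hx i) (pow_dvd_pow_of_dvd hy j)
  exact X_pow_dvd_iff.1 this n hn

lemma hasSubst_pair {x y : PowerSeries R} (hx : X ∣ x) (hy : X ∣ y) :
    MvPowerSeries.HasSubst ![x, y] :=
  MvPowerSeries.hasSubst_of_constantCoeff_zero fun i => by
    fin_cases i
    exacts [X_dvd_iff.1 hx, X_dvd_iff.1 hy]

end PowerSeries

lemma substPair_eq_subst {x y : PowerSeries K} (hx : X ∣ x) (hy : X ∣ y)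
    (f : MvPowerSeries (Fin 2) K) : substPair x y f = MvPowerSeries.subst ![x, y] f := by
  set emb : ℕ × ℕ → (Fin 2 →₀ ℕ) := fun p =>
    Finsupp.single 0 p.1 + Finsupp.single 1 p.2
  have hemb : Function.Injective emb := fun p q hpq => by
    have h0 := congrArg (· 0) hpq
    have h1 := congrArg (· 1) hpq
    simp only [emb, Finsupp.add_apply, Finsupp.single_apply] at h0 h1
    exact Prod.ext (by simpa using h0) (by simpa using h1)
  ext n
  rw [substPair, coeff_mk]
  change _ = MvPowerSeries.coeff (Finsupp.single () n) _
  rw [MvPowerSeries.coeff_subst (hasSubst_pair hx hy), finsum_eq_sum_of_support_subset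
    (s := (Finset.range (n + 1) ×ˢ Finset.range (n + 1)).image emb),
    Finset.sum_image fun p _ q _ h => hemb h]
  · refine Finset.sum_congr rfl fun p _ => ?_
    rw [smul_eq_mul, Finsupp.prod_pow_fin_two]
    simp [emb, mvCoeff]
  · intro d hd
    have hdn : d 0 + d 1 ≤ n := by
      by_contra hlt
      refine hd ?_
      dsimp only
      rw [Finsupp.prod_pow_fin_two, smul_eq_mul]
      exact mul_eq_zero_of_right _ (coeff_pow_mul_pow_eq_zero
        (p := 1) (q := 1) (by simpa using hx) (by simpa using hy) (by omega))
    refine Finset.mem_image.2 ⟨(d 0, d 1), by simp; omega, ?_⟩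
    ext i; fin_cases i <;> simp [emb]

theorem aEquiv_of_subst_eq {x y x' y' k : PowerSeries K} (hx : X ∣ x) (hy : X ∣ y)
    (hx' : X ∣ x') (hy' : X ∣ y') (hk : X ^ 2 ∣ k) {h : Fin 2 → MvPowerSeries (Fin 2) K}
    (hh : ∀ i, 2 ≤ (h i).order)
    (heq : ∀ i, MvPowerSeries.subst ![x.subst (X + k), y.subst (X + k)] (MvPowerSeries.X i + h i)
      = ![x', y'] i) :
    AEquiv (x, y) (x', y') := by
  have hk' : ∀ _ : Unit, 2 ≤ MvPowerSeries.order k := fun _ => le_order_of_X_pow_dvd hk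
  refine ⟨MvPowerSeries.substAlgEquiv h hh, MvPowerSeries.substAlgEquiv (fun _ => k) hk',
    fun f => ?_⟩
  have hxy := hasSubst_pair hx hy
  have hw := MvPowerSeries.hasSubst_X_add hk'
  have hA : (fun j => MvPowerSeries.subst (fun i => MvPowerSeries.X i + k) (![x, y] j))
      = ![x.subst (X + k), y.subst (X + k)] := by
    funext j; fin_cases j <;> rfl
  have hxyw : MvPowerSeries.HasSubst ![x.subst (X + k), y.subst (X + k)] := by
    simpa [hA] using hxy.comp hw
  simp only [MvPowerSeries.coe_substAlgEquiv]
  rw [substPair_eq_subst hx' hy', substPair_eq_subst hx hy,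
    MvPowerSeries.subst_comp_subst_apply hxy hw, hA,
    MvPowerSeries.subst_comp_subst_apply (MvPowerSeries.hasSubst_X_add hh) hxyw]
  simp only [heq]

section Conductor

variable {R : Type*} [CommRing R] {x y : PowerSeries R}

def weight45 (d : Fin 2 →₀ ℕ) : ℕ := 4 * d 0 + 5 * d 1

/-- For `m ≥ 12` the unique `(i, j)` with `4 i + 5 j = m` and `j < 4`. -/
noncomputable def exp45 (m : ℕ) : Fin 2 →₀ ℕ :=
  Finsupp.single 0 ((m - 5 * (m % 4)) / 4) + Finsupp.single 1 (m % 4)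

@[simp] lemma exp45_zero (m : ℕ) : exp45 m 0 = (m - 5 * (m % 4)) / 4 := by simp [exp45]

@[simp] lemma exp45_one (m : ℕ) : exp45 m 1 = m % 4 := by simp [exp45]

lemma weight45_exp45 {m : ℕ} (hm : 12 ≤ m) : weight45 (exp45 m) = m := by
  simp only [weight45, exp45_zero, exp45_one]; omega

lemma exp45_weight45 {d : Fin 2 →₀ ℕ} (hd : d 1 < 4) : exp45 (weight45 d) = d := by
  ext i; fin_cases i <;> simp [weight45] <;> omega

lemma coeff_pow_mul_pow_self (hx : X ^ 5 ∣ x - X ^ 4) (hy : X ^ 6 ∣ y - X ^ 5) (i j : ℕ) :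
    coeff (4 * i + 5 * j) (x ^ i * y ^ j) = 1 := by
  obtain ⟨u, hu⟩ := hx
  obtain ⟨v, hv⟩ := hy
  have hxy : x ^ i * y ^ j = X ^ (4 * i + 5 * j) * ((1 + X * u) ^ i * (1 + X * v) ^ j) := by
    rw [show x = X ^ 4 * (1 + X * u) by linear_combination hu,
      show y = X ^ 5 * (1 + X * v) by linear_combination hv, mul_pow, mul_pow, pow_add, pow_mul,
      pow_mul]
    ring
  rw [hxy, coeff_X_pow_mul', if_pos le_rfl, Nat.sub_self, coeff_zero_eq_constantCoeff_apply]
  simp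

variable (x y) in
/-- Successive approximation of `T` by the monomials `x ^ i * y ^ j`: step `n` removes the
coefficient of `t ^ n` using the monomial of exponent `exp45 n`. -/
noncomputable def remainder45 (T : PowerSeries R) : ℕ → PowerSeries R
  | 0 => T
  | n + 1 => remainder45 T n - C (coeff n (remainder45 T n)) * (x ^ exp45 n 0 * y ^ exp45 n 1)

lemma coeff_remainder45 (hx : X ^ 5 ∣ x - X ^ 4) (hy : X ^ 6 ∣ y - X ^ 5) {T : PowerSeries R}
    (hT : X ^ 12 ∣ T) (n : ℕ) {m : ℕ} (hm : m < max n 12) :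
    coeff m (remainder45 x y T n) = 0 := by
  induction n generalizing m with
  | zero => exact X_pow_dvd_iff.1 hT m (by simpa using hm)
  | succ n ih =>
    rw [remainder45, map_sub, coeff_C_mul]
    by_cases hn : n < 12
    · rw [ih (by omega), ih (m := n) (by omega), zero_mul, sub_zero]
    have hw := weight45_exp45 (not_lt.1 hn)
    rw [weight45] at hw
    rcases Nat.lt_or_ge m n with hmn | hmn
    · rw [ih (by omega), coeff_pow_mul_pow_eq_zero (X_pow_dvd_of_X_pow_succ_dvd_sub hx)
        (X_pow_dvd_of_X_pow_succ_dvd_sub hy) (by omega), mul_zero, sub_zero]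
    · obtain rfl : m = n := by omega
      have hlead := coeff_pow_mul_pow_self hx hy (exp45 m 0) (exp45 m 1)
      rw [hw] at hlead
      rw [hlead, mul_one, sub_self]

lemma remainder45_eq (T : PowerSeries R) (n : ℕ) :
    remainder45 x y T n = T - ∑ m ∈ Finset.range n,
      C (coeff m (remainder45 x y T m)) * (x ^ exp45 m 0 * y ^ exp45 m 1) := by
  induction n with
  | zero => simp [remainder45]
  | succ n ih => rw [remainder45, Finset.sum_range_succ, ih]; ring

/-- The series `∑_{m ≥ 12} γ m X ^ i Y ^ j` with `(i, j) = exp45 m`. -/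
def lift45 (γ : ℕ → R) : MvPowerSeries (Fin 2) R :=
  fun d => if d 1 < 4 ∧ 12 ≤ weight45 d then γ (weight45 d) else 0

lemma two_le_order_lift45 (γ : ℕ → R) : 2 ≤ (lift45 γ).order := by
  refine MvPowerSeries.le_order fun d hd => ?_
  change ite _ _ _ = 0
  rw [Finsupp.degree_eq_sum, Fin.sum_univ_two] at hd
  norm_cast at hd
  rw [if_neg (by simp only [weight45]; omega)]

lemma coeff_subst_lift45 (hx : X ^ 4 ∣ x) (hy : X ^ 5 ∣ y) (γ : ℕ → R) (n : ℕ) :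
    coeff n (MvPowerSeries.subst ![x, y] (lift45 γ))
      = ∑ m ∈ Finset.Ico 12 (n + 1), γ m * coeff n (x ^ exp45 m 0 * y ^ exp45 m 1) := by
  change MvPowerSeries.coeff (Finsupp.single () n) _ = _
  rw [MvPowerSeries.coeff_subst (hasSubst_pair ((dvd_pow_self X (by norm_num)).trans hx)
      ((dvd_pow_self X (by norm_num)).trans hy)),
    finsum_eq_sum_of_support_subset (s := (Finset.Ico 12 (n + 1)).image exp45),
    Finset.sum_image fun m hm m' hm' h => by
      rw [← weight45_exp45 (Finset.mem_Ico.1 hm).1, h, weight45_exp45 (Finset.mem_Ico.1 hm').1]]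
  · refine Finset.sum_congr rfl fun m hm => ?_
    have hm := (Finset.mem_Ico.1 hm).1
    change ite _ _ _ • _ = _
    rw [weight45_exp45 hm, if_pos ⟨by simp; omega, hm⟩, smul_eq_mul, Finsupp.prod_pow_fin_two]
    rfl
  · intro d hd
    rw [Function.mem_support] at hd
    have hd4 : d 1 < 4 ∧ 12 ≤ weight45 d := by
      by_contra h
      refine hd ?_
      change ite _ _ _ • _ = 0
      rw [if_neg h, zero_smul]
    have hdn : weight45 d ≤ n := by
      by_contra h
      refine hd ?_
      rw [Finsupp.prod_pow_fin_two, smul_eq_mul]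
      exact mul_eq_zero_of_right _ (coeff_pow_mul_pow_eq_zero hx hy (by rw [weight45] at h; omega))
    exact Finset.mem_image.2
      ⟨weight45 d, Finset.mem_Ico.2 ⟨hd4.2, by omega⟩, exp45_weight45 hd4.1⟩

theorem exists_subst_eq_of_X_pow_dvd (hx : X ^ 5 ∣ x - X ^ 4) (hy : X ^ 6 ∣ y - X ^ 5)
    {T : PowerSeries R} (hT : X ^ 12 ∣ T) :
    ∃ E : MvPowerSeries (Fin 2) R, 2 ≤ E.order ∧ MvPowerSeries.subst ![x, y] E = T := by
  refine ⟨lift45 fun m => coeff m (remainder45 x y T m), two_le_order_lift45 _, ?_⟩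
  ext n
  have hrem := coeff_remainder45 hx hy hT (n + 1) (m := n) (by omega)
  rw [remainder45_eq, map_sub, sub_eq_zero, map_sum] at hrem
  simp only [coeff_C_mul] at hrem
  rw [coeff_subst_lift45 (X_pow_dvd_of_X_pow_succ_dvd_sub hx) (X_pow_dvd_of_X_pow_succ_dvd_sub hy),
    hrem, Finset.range_eq_Ico]
  refine Finset.sum_subset (Finset.Ico_subset_Ico_left (Nat.zero_le 12)) fun m hm' hm => ?_
  simp only [Finset.mem_Ico] at hm hm'
  rw [coeff_remainder45 hx hy hT m (by omega), zero_mul]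

end Conductor

theorem aEquiv_of_X_pow_twelve_dvd {x y x' k : PowerSeries K} (c : K) (hx : X ∣ x) (hy : X ∣ y)
    (hx' : X ∣ x') (hk : X ^ 2 ∣ k) (hx4 : X ^ 5 ∣ x.subst (X + k) - X ^ 4)
    (hy5 : X ^ 6 ∣ y.subst (X + k) - X ^ 5) (hx12 : X ^ 12 ∣ x' - x.subst (X + k))
    (hy12 : X ^ 12 ∣ X ^ 5 - y.subst (X + k) - C c * x.subst (X + k) * y.subst (X + k)) :
    AEquiv (x, y) (x', X ^ 5) := by
  set xw := x.subst (X + k)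
  set yw := y.subst (X + k)
  obtain ⟨E₁, hE₁, hE₁'⟩ := exists_subst_eq_of_X_pow_dvd hx4 hy5 hx12
  obtain ⟨E₂, hE₂, hE₂'⟩ := exists_subst_eq_of_X_pow_dvd hx4 hy5 hy12
  have hs : MvPowerSeries.HasSubst ![xw, yw] :=
    hasSubst_pair ((dvd_pow_self X (by norm_num)).trans (X_pow_dvd_of_X_pow_succ_dvd_sub hx4))
      ((dvd_pow_self X (by norm_num)).trans (X_pow_dvd_of_X_pow_succ_dvd_sub hy5))
  refine aEquiv_of_subst_eq
    (h := ![E₁, MvPowerSeries.C c * (MvPowerSeries.X 0 * MvPowerSeries.X 1) + E₂])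
    hx hy hx' (X_dvd_iff.2 (by simp)) hk (fun i => ?_) fun i => ?_
  · fin_cases i
    · exact hE₁
    · exact (le_min (MvPowerSeries.two_le_order_C_mul_X_mul_X c 0 1) hE₂).trans
        MvPowerSeries.min_order_le_add
  · fin_cases i
    · simp only [Fin.zero_eta, Fin.isValue, Matrix.cons_val_zero]
      rw [MvPowerSeries.subst_add hs, MvPowerSeries.subst_X hs, hE₁', Matrix.cons_val_zero,
        add_sub_cancel]
    · simp only [Fin.mk_one, Fin.isValue, Matrix.cons_val_one, Matrix.cons_val_zero]
      rw [MvPowerSeries.subst_add hs, MvPowerSeries.subst_add hs, MvPowerSeries.subst_mul hs,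
        MvPowerSeries.subst_mul hs, MvPowerSeries.subst_X hs, MvPowerSeries.subst_X hs,
        MvPowerSeries.subst_C, hE₂',
        show (MvPowerSeries.C c : MvPowerSeries Unit K) = C c from rfl]
      simp only [Matrix.cons_val_zero, Matrix.cons_val_one]
      ring

lemma X_pow_dvd_subst_of_charTwo [CharP K 2] (a c : K) {xw yw : PowerSeries K}
    (hxw : xw = (X ^ 4 + X ^ 6 + C a * X ^ 7 + C (a * c) * X ^ 11 : PowerSeries K).subst
      (X + (C c * X ^ 5 + C c * X ^ 7)))
    (hyw : yw = (X ^ 5 : PowerSeries K).subst (X + (C c * X ^ 5 + C c * X ^ 7))) :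
    X ^ 5 ∣ xw - X ^ 4 ∧ X ^ 6 ∣ yw - X ^ 5 ∧
      X ^ 12 ∣ X ^ 4 + X ^ 6 + C a * X ^ 7 - xw ∧ X ^ 12 ∣ X ^ 5 - yw - C c * xw * yw := by
  have hw : HasSubst (X + (C c * X ^ 5 + C c * X ^ 7) : PowerSeries K) :=
    HasSubst.of_constantCoeff_zero' (by simp)
  have hC (r : K) : substAlgHom hw (C r) = C r := by simpa using (substAlgHom hw).commutes r
  simp only [← coe_substAlgHom hw, map_add, map_mul, map_pow, substAlgHom_X, hC] at hxw hyw
  set π := Ideal.Quotient.mk (Ideal.span {(X : PowerSeries K) ^ 12})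
  have hX : π X ^ 12 = 0 := by
    rw [← map_pow, Ideal.Quotient.eq_zero_iff_mem]
    exact Ideal.mem_span_singleton_self _
  have h2 : (2 : PowerSeries K ⧸ Ideal.span {(X : PowerSeries K) ^ 12}) = 0 := by
    rw [← map_ofNat π 2, ← map_ofNat C 2, CharTwo.two_eq_zero, map_zero, map_zero]
  obtain ⟨hx12, hy12, hxy12⟩ : X ^ 12 ∣ xw - (X ^ 4 + X ^ 6 + C a * X ^ 7) ∧
      X ^ 12 ∣ yw - (X ^ 5 + C c * X ^ 9 + C c * X ^ 11) ∧
      X ^ 12 ∣ X ^ 5 - yw - C c * xw * yw := by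
    subst hxw hyw
    simp only [X_pow_dvd_sub_iff, map_add, map_sub, map_mul, map_pow]
    exact ⟨by grind, by grind, by grind⟩
  exact ⟨X_pow_dvd_sub_trans (by norm_num) hx12 ⟨X + C a * X ^ 2, by ring⟩,
    X_pow_dvd_sub_trans (by norm_num) hy12 ⟨C c * X ^ 3 + C c * X ^ 5, by ring⟩,
    dvd_sub_comm.1 hx12, hxy12⟩

theorem statement_11_general [CharP K 2] (a b : K) (ha : a ≠ 0) :
    AEquiv ((PowerSeries.X : PowerSeries K) ^ 4 + PowerSeries.X ^ 6
          + PowerSeries.C (R := K) a * PowerSeries.X ^ 7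
          + PowerSeries.C (R := K) b * PowerSeries.X ^ 11,
        PowerSeries.X ^ 5)
      ((PowerSeries.X : PowerSeries K) ^ 4 + PowerSeries.X ^ 6
          + PowerSeries.C (R := K) a * PowerSeries.X ^ 7,
        PowerSeries.X ^ 5) := by
  obtain ⟨c, rfl⟩ : ∃ c, b = a * c := ⟨a⁻¹ * b, by field_simp⟩
  obtain ⟨hx4, hy5, hx12, hy12⟩ := X_pow_dvd_subst_of_charTwo a c rfl rfl
  exact aEquiv_of_X_pow_twelve_dvd c (X_dvd_iff.2 (by simp)) (X_dvd_iff.2 (by simp))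
    (X_dvd_iff.2 (by simp)) ⟨C c * X ^ 3 + C c * X ^ 5, by ring⟩ hx4 hy5 hx12 hy12

/-- in characteristic `2`, for `a ≠ 0`,
`(t⁴ + t⁶ + a·t⁷ + b·t^{11}, t⁵) ∼_𝒜 (t⁴ + t⁶ + a·t⁷, t⁵)`. -/
theorem statement_11 [IsAlgClosed K] [CharP K 2] (a b : K) (ha : a ≠ 0) :
    AEquiv ((PowerSeries.X : PowerSeries K) ^ 4 + PowerSeries.X ^ 6
          + PowerSeries.C (R := K) a * PowerSeries.X ^ 7
          + PowerSeries.C (R := K) b * PowerSeries.X ^ 11,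
        PowerSeries.X ^ 5)
      ((PowerSeries.X : PowerSeries K) ^ 4 + PowerSeries.X ^ 6
          + PowerSeries.C (R := K) a * PowerSeries.X ^ 7,
        PowerSeries.X ^ 5) :=
  statement_11_general a b ha
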